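/- arXiv:2505.16987 — 2 statements merged into one kernel-verified Lean document; each statement's English description precedes it below -/
import Mathlib

section
/- Let $G$ be a countable group acting freely on a standard probability space $(X,m)$ by measure-preserving automorphisms $T_g$, let $c\in(0,1)$, and let $(F_k)$ be a sequence of finite subsets of $G$. Suppose $(V_k)$ is a sequence of measurable subsets of $X$ such that each $V_k$ is $(F_k,c)$-invariant, i.e. $m\big(\bigcap_{g\in F_k} T_g V_k\big) > c\, m(V_k)$, and $\sum_k m(V_k) < \infty$. Then for every $\varepsilon>0$ and every measurable set $A'$ with $m(A')>0$, there exists a measurable set $A$ with $m(A'\,\Delta\,A)<\varepsilon$, $m(A)>0$, and a natural number $N$ such that for all $k>N$ and all nonnegative weights $(w_{g,k})_{g\in F_k}$ with $\sum_{g\in F_k} w_{g,k}=1$, one has $\big\|\sum_{g\in F_k} w_{g,k}\,\mathbf{1}_A\circ T_{g^{-1}} - m(A)\big\|_{L^1(m)} > c\, m(V_k)\, m(A)$. -/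
/-!
Remove from `A'` the tail `S = ⋃_{j ≥ N} V_j`; since `∑ m(V_k) < ∞`, for large `N` this changes
`A'` by less than `ε` and leaves `A = A' \ S` of positive measure. For `k > N` the set `A` misses
`V_k`, so on `W_k = ⋂_{g ∈ F_k} T_g V_k` every translate `𝟙_A ∘ T_{g⁻¹}` vanishes and the weighted
average deviates from `m(A)` by exactly `m(A)`. Hence the `L¹` deviation is at least
`m(A) m(W_k) > c m(V_k) m(A)`.
-/

open MeasureTheory Set

section Action

variable {G X : Type*} [Group G] {T : G → X → X}

theorem leftInverse_inv_of_map_mul (hT1 : T 1 = id) (hTmul : ∀ g h : G, T (g * h) = T g ∘ T h)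
    (g : G) : Function.LeftInverse (T g⁻¹) (T g) := fun x => by
  rw [← Function.comp_apply (f := T g⁻¹), ← hTmul, inv_mul_cancel, hT1, id]

theorem image_eq_preimage_inv_of_map_mul (hT1 : T 1 = id)
    (hTmul : ∀ g h : G, T (g * h) = T g ∘ T h) (g : G) (s : Set X) :
    T g '' s = T g⁻¹ ⁻¹' s :=
  have hright : Function.LeftInverse (T g) (T g⁻¹) := by
    simpa using leftInverse_inv_of_map_mul hT1 hTmul g⁻¹
  congrFun (image_eq_preimage_of_inverse (leftInverse_inv_of_map_mul hT1 hTmul g) hright) s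

end Action

section WeightedAverage

variable {ι X : Type*} (s : Finset ι) (w : ι → ℝ) (φ : ι → X → X) {A : Set X}

theorem sum_mul_indicator_comp_eq_zero_on_biInter_preimage {V : Set X} (hAV : Disjoint A V) :
    EqOn (fun x => ∑ i ∈ s, w i * A.indicator (fun _ => (1 : ℝ)) (φ i x)) 0
      (⋂ i ∈ s, φ i ⁻¹' V) := fun x hx =>
  Finset.sum_eq_zero fun i hi => by
    rw [indicator_of_notMem (hAV.notMem_of_mem_right (mem_iInter₂.1 hx i hi)), mul_zero]

theorem integrable_sum_mul_indicator_comp [MeasurableSpace X] {μ : Measure X} [IsFiniteMeasure μ]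
    (hφ : ∀ i ∈ s, Measurable (φ i)) (hA : MeasurableSet A) :
    Integrable (fun x => ∑ i ∈ s, w i * A.indicator (fun _ => (1 : ℝ)) (φ i x)) μ :=
  integrable_finsetSum _ fun i hi =>
    (((integrable_const (1 : ℝ)).indicator (hφ i hi hA)).const_mul (w i)).congr
      (ae_of_all _ fun _ => rfl)

end WeightedAverage

section Measure

variable {X : Type*} [MeasurableSpace X] {μ : Measure X}

theorem exists_measure_iUnion_nat_add_lt {V : ℕ → Set X} (hV : ∑' k, μ (V k) ≠ ⊤)
    {δ : ENNReal} (hδ : 0 < δ) : ∃ N, μ (⋃ j, V (j + N)) < δ :=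
  (((ENNReal.tendsto_sum_nat_add _ hV).eventually_lt_const hδ).exists).imp fun _ h =>
    (measure_iUnion_le _).trans_lt h

theorem measure_symmDiff_sdiff_le (A S : Set X) : μ (symmDiff A (A \ S)) ≤ μ S :=
  measure_mono <| symmDiff_le (subset_sdiff_union A S) (sdiff_subset.trans subset_union_left)

theorem measure_sdiff_pos_of_lt {A S : Set X} (h : μ S < μ A) : 0 < μ (A \ S) :=
  (tsub_pos_of_lt h).trans_le le_measure_sdiff

theorem mul_measureReal_le_integral_abs_sub [IsFiniteMeasure μ] {f : X → ℝ}
    (hf : Integrable f μ) {W : Set X} (hW : MeasurableSet W) (hfW : EqOn f 0 W) {a : ℝ}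
    (ha : 0 ≤ a) : a * μ.real W ≤ ∫ x, |f x - a| ∂μ := by
  have hbound : W.indicator (fun _ => a) ≤ fun x => |f x - a| := fun x => by
    by_cases hx : x ∈ W
    · simp [indicator_of_mem hx, hfW hx, abs_of_nonneg ha]
    · simp [indicator_of_notMem hx]
  calc a * μ.real W = ∫ x, W.indicator (fun _ => a) x ∂μ := by
        rw [integral_indicator_const _ hW, smul_eq_mul, mul_comm]
    _ ≤ ∫ x, |f x - a| ∂μ :=
        integral_mono ((integrable_const a).indicator hW) (hf.sub (integrable_const a)).abs hbound

end Measure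

theorem mul_toReal_lt_toReal_of_ofReal_mul_lt {c : ℝ} {a b : ENNReal} (hb : b ≠ ⊤)
    (h : ENNReal.ofReal c * a < b) : c * a.toReal < b.toReal :=
  calc c * a.toReal ≤ (ENNReal.ofReal c).toReal * a.toReal :=
        mul_le_mul_of_nonneg_right (le_max_left c 0) ENNReal.toReal_nonneg
    _ < b.toReal := by rw [← ENNReal.toReal_mul]; exact ENNReal.toReal_strict_mono hb h

theorem weighted_averages_deviation_amenable_lemma_general
    {X : Type*} [MeasurableSpace X]
    (m : Measure X) [IsProbabilityMeasure m]
    {G : Type*} [Group G]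
    (T : G → X → X)
    (hT1 : T 1 = id)
    (hTmul : ∀ g h : G, T (g * h) = T g ∘ T h)
    (hTmp : ∀ g : G, MeasurePreserving (T g) m m)
    (c : ℝ)
    (F : ℕ → Finset G)
    (V : ℕ → Set X) (hVmeas : ∀ k, MeasurableSet (V k))
    (hVinv : ∀ k, m (⋂ g ∈ F k, T g '' V k) > ENNReal.ofReal c * m (V k))
    (hVsum : ∑' k, m (V k) < ⊤)
    (ε : ℝ) (hε : 0 < ε)
    (A' : Set X) (hA'meas : MeasurableSet A') (hA'pos : 0 < m A') :
    ∃ A : Set X, MeasurableSet A ∧ m (symmDiff A' A) < ENNReal.ofReal ε ∧ 0 < m A ∧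
      ∃ N : ℕ, ∀ k > N, ∀ w : G → ℝ,
        (∀ g ∈ F k, 0 ≤ w g) → (∑ g ∈ F k, w g = 1) →
        ∫ x, |(∑ g ∈ F k, w g * A.indicator (fun _ => (1 : ℝ)) (T g⁻¹ x)) - (m A).toReal| ∂m
          > c * (m (V k)).toReal * (m A).toReal := by
  obtain ⟨N, hN⟩ := exists_measure_iUnion_nat_add_lt hVsum.ne
    (lt_min (ENNReal.ofReal_pos.2 hε) hA'pos)
  set S := ⋃ j, V (j + N)
  have hAmeas : MeasurableSet (A' \ S) := hA'meas.diff (.iUnion fun j => hVmeas _)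
  have hApos : 0 < m (A' \ S) := measure_sdiff_pos_of_lt (hN.trans_le (min_le_right _ _))
  refine ⟨A' \ S, hAmeas,
    (measure_symmDiff_sdiff_le A' S).trans_lt (hN.trans_le (min_le_left _ _)), hApos, N,
    fun k hk w _ _ => ?_⟩
  have hVS : V k ⊆ S := subset_iUnion_of_subset (k - N) (by rw [Nat.sub_add_cancel hk.le])
  have hWV := hVinv k
  simp_rw [image_eq_preimage_inv_of_map_mul hT1 hTmul] at hWV
  have hWmeas : MeasurableSet (⋂ g ∈ F k, T g⁻¹ ⁻¹' V k) :=
    .biInter (F k).countable_toSet fun g _ => (hTmp g⁻¹).measurable (hVmeas k)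
  calc c * (m (V k)).toReal * (m (A' \ S)).toReal
      < m.real (⋂ g ∈ F k, T g⁻¹ ⁻¹' V k) * (m (A' \ S)).toReal :=
        mul_lt_mul_of_pos_right (mul_toReal_lt_toReal_of_ofReal_mul_lt (by finiteness) hWV)
          (ENNReal.toReal_pos hApos.ne' (by finiteness))
    _ ≤ _ := by
        rw [mul_comm]
        exact mul_measureReal_le_integral_abs_sub
          (integrable_sum_mul_indicator_comp _ _ _ (fun g _ => (hTmp g⁻¹).measurable) hAmeas)
          hWmeas (sum_mul_indicator_comp_eq_zero_on_biInter_preimage _ _ _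
            (disjoint_sdiff_left.mono_right hVS)) ENNReal.toReal_nonneg

/-- The Lemma of the paper: given a summable sequence of `(F_k, c)`-invariant sets `V_k`,
one can trim any set `A'` of positive measure to a set `A` so that all weighted averages
over `F_k` (for large `k`) deviate from `m A` in `L¹` by more than `c · m(V_k) · m(A)`. -/
theorem weighted_averages_deviation_amenable_lemma
    {X : Type*} [MeasurableSpace X] [StandardBorelSpace X]
    (m : Measure X) [IsProbabilityMeasure m]
    {G : Type*} [Group G] [Countable G]
    (T : G → X → X)
    (hT1 : T 1 = id)
    (hTmul : ∀ g h : G, T (g * h) = T g ∘ T h)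
    (hTmp : ∀ g : G, MeasurePreserving (T g) m m)
    (hfree : ∀ g : G, g ≠ 1 → m {x | T g x = x} = 0)
    (c : ℝ) (hc : c ∈ Set.Ioo (0 : ℝ) 1)
    (F : ℕ → Finset G)
    (V : ℕ → Set X) (hVmeas : ∀ k, MeasurableSet (V k))
    (hVinv : ∀ k, m (⋂ g ∈ F k, T g '' V k) > ENNReal.ofReal c * m (V k))
    (hVsum : ∑' k, m (V k) < ⊤)
    (ε : ℝ) (hε : 0 < ε)
    (A' : Set X) (hA'meas : MeasurableSet A') (hA'pos : 0 < m A') :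
    ∃ A : Set X, MeasurableSet A ∧ m (symmDiff A' A) < ENNReal.ofReal ε ∧ 0 < m A ∧
      ∃ N : ℕ, ∀ k > N, ∀ w : G → ℝ,
        (∀ g ∈ F k, 0 ≤ w g) → (∑ g ∈ F k, w g = 1) →
        ∫ x, |(∑ g ∈ F k, w g * A.indicator (fun _ => (1 : ℝ)) (T g⁻¹ x)) - (m A).toReal| ∂m
          > c * (m (V k)).toReal * (m A).toReal :=
  weighted_averages_deviation_amenable_lemma_general m T hT1 hTmul hTmp c F V hVmeas hVinv hVsum ε
    hε A' hA'meas hA'pos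
end

section
/- Let $T$ be a measure-preserving automorphism of a probability space $(X,m)$, let $f\in L^1(X,m)$, let $c\in\mathbb{R}$, and set $P_N f = \frac{1}{N}\sum_{i=1}^{N} f\circ T^i$. If $N\cdot\|P_N f - c\|_{L^1(m)} \to 0$ as $N\to\infty$ (i.e., $\|P_N f - c\|_{L^1(m)} = o(1/N)$), then $f = c$ almost everywhere. -/
open MeasureTheory Filter Set

/-- If the ergodic averages `P_N f = (1/N) ∑_{i=1}^N f ∘ T^i` of a measure-preserving
automorphism satisfy `‖P_N f − c‖₁ = o(1/N)`, then `f = c` almost everywhere. -/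
theorem o_one_over_N_forces_constant
    {X : Type*} [MeasurableSpace X] [Nonempty X]
    (m : Measure X) [IsProbabilityMeasure m]
    (T : X → X) (hT : MeasurePreserving T m m) (hTbij : Function.Bijective T)
    (hTinv_meas : Measurable (Function.invFun T))
    (f : X → ℝ) (hf_int : Integrable f m) (c : ℝ)
    (hrate : Tendsto
      (fun N : ℕ =>
        (N : ℝ) * ∫ x, |((N : ℝ)⁻¹ * ∑ i ∈ Finset.Icc 1 N, f (T^[i] x)) - c| ∂m)
      atTop (nhds 0)) :
    f =ᵐ[m] fun _ => c := by
  -- T is a measurable equivalence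
  have hinv : Function.LeftInverse (Function.invFun T) T :=
    Function.leftInverse_invFun hTbij.1
  have hrinv : Function.RightInverse (Function.invFun T) T :=
    Function.rightInverse_invFun hTbij.2
  let e : X ≃ᵐ X :=
    { toFun := T, invFun := Function.invFun T, left_inv := hinv, right_inv := hrinv,
      measurable_toFun := hT.measurable, measurable_invFun := hTinv_meas }
  have hemb : MeasurableEmbedding T := e.measurableEmbedding
  set g : X → ℝ := fun x => f x - c with hg_def
  have hg_int : Integrable g m := hf_int.sub (integrable_const c)
  set S : ℕ → X → ℝ := fun N x => ∑ i ∈ Finset.Icc 1 N, g (T^[i] x) with hS_def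
  have hS_int : ∀ N, Integrable (S N) m := fun N =>
    integrable_finset_sum _ fun i _ =>
      ((hT.iterate i).integrable_comp hg_int.aestronglyMeasurable).mpr hg_int
  set A : ℕ → ℝ := fun N => ∫ x, |S N x| ∂m with hA_def
  -- A N → 0
  have hA0 : Tendsto A atTop (nhds 0) := by
    apply hrate.congr'
    filter_upwards [eventually_ge_atTop 1] with N hN
    have hNpos : (0:ℝ) < N := by exact_mod_cast hN
    rw [← integral_const_mul]
    apply integral_congr_ae
    filter_upwards [] with x
    have hcard : ((Finset.Icc 1 N).card : ℝ) = N := by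
      simp [Nat.card_Icc]
    have h1 : (N:ℝ) * |(N : ℝ)⁻¹ * (∑ i ∈ Finset.Icc 1 N, f (T^[i] x)) - c|
        = |(N:ℝ) * ((N : ℝ)⁻¹ * (∑ i ∈ Finset.Icc 1 N, f (T^[i] x)) - c)| := by
      rw [abs_mul, abs_of_pos hNpos]
    rw [h1]
    congr 1
    rw [mul_sub, ← mul_assoc, mul_inv_cancel₀ hNpos.ne', one_mul]
    simp only [hS_def, hg_def, Finset.sum_sub_distrib, Finset.sum_const, nsmul_eq_mul, hcard]
  -- key identity : S (N+1) x = S N (T x) + g (T x)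
  have h1 : ∀ M (y : X), S M y = ∑ i ∈ Finset.range M, g (T^[i+1] y) := by
    intro M y
    induction M with
    | zero => simp [hS_def]
    | succ M ih =>
      simp only [hS_def] at ih ⊢
      rw [Finset.sum_Icc_succ_top (by omega), ih, Finset.sum_range_succ]
  have hid : ∀ N x, S (N+1) x = S N (T x) + g (T x) := by
    intro N x
    rw [h1, h1, Finset.sum_range_succ']
    congr 1
  -- the key integral estimate
  set I : ℝ := ∫ x, |g x| ∂m with hI_def
  have hIcomp : ∀ N, (∫ x, |S N (T x)| ∂m) = A N := fun N =>
    hT.integral_comp hemb (fun y => |S N y|)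
  have hIg : (∫ x, |g (T x)| ∂m) = I := hT.integral_comp hemb (fun y => |g y|)
  have hkey : ∀ N, I ≤ A (N+1) + A N := by
    intro N
    rw [← hIg, ← hIcomp N]
    have hint1 : Integrable (fun x => |S (N+1) x|) m := (hS_int (N+1)).abs
    have hint2 : Integrable (fun x => |S N (T x)|) m :=
      ((hT.integrable_comp (hS_int N).aestronglyMeasurable).mpr (hS_int N)).abs
    calc (∫ x, |g (T x)| ∂m) ≤ ∫ x, (|S (N+1) x| + |S N (T x)|) ∂m := by
          apply integral_mono_of_nonneg
          · filter_upwards [] with x using abs_nonneg _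
          · exact hint1.add hint2
          · filter_upwards [] with x
            have := hid N x
            have : g (T x) = S (N+1) x - S N (T x) := by linarith [hid N x]
            rw [this]
            exact abs_sub _ _
      _ = A (N+1) + ∫ x, |S N (T x)| ∂m := by rw [integral_add hint1 hint2]
      _ ≤ A (N+1) + ∫ x, |S N (T x)| ∂m := le_refl _
  -- conclude I ≤ 0
  have hlim : Tendsto (fun N => A (N+1) + A N) atTop (nhds 0) := by
    have := (hA0.comp (tendsto_add_atTop_nat 1)).add hA0
    simpa using this
  have hIle : I ≤ 0 := le_of_tendsto_of_tendsto' tendsto_const_nhds hlim hkey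
  have hIge : 0 ≤ I := integral_nonneg fun x => abs_nonneg _
  have hI0 : I = 0 := le_antisymm hIle hIge
  have habs : (fun x => |g x|) =ᵐ[m] 0 := by
    rw [← integral_eq_zero_iff_of_nonneg (fun x => abs_nonneg (g x)) hg_int.abs]
    exact hI0
  filter_upwards [habs] with x hx
  have : |g x| = 0 := hx
  have : g x = 0 := abs_eq_zero.mp this
  simpa [hg_def, sub_eq_zero] using this
end
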